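/- (Lipschitz dependence of the stationary value map on the measure.) With S^μ as the contraction map of the stationary discounted value equation and u^μ its fixed point, the map 𝒯₁ : 𝒫([d]) → ℝ^d, μ ↦ u^μ, is Lipschitz with respect to the sup-norms; specifically ‖u^μ − u^{μ̃}‖_∞ ≤ (( (d−1)𝔞_u + r ) / r) · (C_{L,F}/((d−1)𝔞_l + r)) ‖μ − μ̃‖_∞, where C_{L,F} is the Lipschitz constant of F(x,·). -/

import Mathlib

/-!
Each coordinate of `S^μ u` is an infimum over the same nonempty set of rate vectors, and
changing `μ` (resp. `u`) moves every candidate value by at most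
`C_{L,F}‖μ - μ'‖ / ((d-1)𝔞_l + r)` (resp. `κ‖u - u'‖`), since the total off-diagonal rate
lies in `[(d-1)𝔞_l, (d-1)𝔞_u]`. Hence `S^μ` is a `κ`-contraction which is uniformly close to
`S^{μ'}`, and the standard estimate for fixed points of nearby contractions bounds
`‖u^μ - u^{μ'}‖` by the perturbation divided by `1 - κ = r / ((d-1)𝔞_u + r)`.
-/

def admissibleRates (d : ℕ) (al au : ℝ) (x : Fin d) : Set (Fin d → ℝ) :=
  {a : Fin d → ℝ | (∀ y, y ≠ x → a y ∈ Set.Icc al au) ∧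
    a x = -∑ y ∈ Finset.univ \ {x}, a y}

open Finset

section Infimum

variable {α : Type*} {K : Set α} {g h : α → ℝ} {c : ℝ}

theorem bddBelow_image_of_le_add (hg : BddBelow (g '' K)) (hgh : ∀ a ∈ K, g a ≤ h a + c) :
    BddBelow (h '' K) := by
  obtain ⟨m, hm⟩ := hg
  refine ⟨m - c, ?_⟩
  rintro _ ⟨a, ha, rfl⟩
  linarith [hm (Set.mem_image_of_mem g ha), hgh a ha]

theorem csInf_image_le_csInf_image_add (hK : K.Nonempty) (hg : BddBelow (g '' K))
    (hgh : ∀ a ∈ K, g a ≤ h a + c) : sInf (g '' K) ≤ sInf (h '' K) + c := by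
  refine sub_le_iff_le_add.mp (le_csInf (hK.image h) ?_)
  rintro _ ⟨a, ha, rfl⟩
  linarith [csInf_le hg (Set.mem_image_of_mem g ha), hgh a ha]

/-- No boundedness is assumed: `g` and `h` are bounded below together, and otherwise both
infima are the junk value `0`. -/
theorem abs_sInf_image_sub_sInf_image_le (hK : K.Nonempty) (hc : ∀ a ∈ K, |g a - h a| ≤ c) :
    |sInf (g '' K) - sInf (h '' K)| ≤ c := by
  have hgh : ∀ a ∈ K, g a ≤ h a + c := fun a ha => by
    linarith [le_abs_self (g a - h a), hc a ha]
  have hhg : ∀ a ∈ K, h a ≤ g a + c := fun a ha => by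
    linarith [neg_abs_le (g a - h a), hc a ha]
  by_cases hg : BddBelow (g '' K)
  · have hh := bddBelow_image_of_le_add hg hgh
    rw [abs_sub_le_iff]
    constructor <;> linarith [csInf_image_le_csInf_image_add hK hg hgh,
      csInf_image_le_csInf_image_add hK hh hhg]
  · have hh : ¬BddBelow (h '' K) := fun hh => hg (bddBelow_image_of_le_add hh hhg)
    obtain ⟨a, ha⟩ := hK
    rw [Real.sInf_of_not_bddBelow hg, Real.sInf_of_not_bddBelow hh, sub_self, abs_zero]
    exact (abs_nonneg _).trans (hc a ha)

end Infimum

theorem abs_sum_mul_le_sum_mul_norm {ι : Type*} [Fintype ι] (s : Finset ι) {w : ι → ℝ}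
    (hw : ∀ y ∈ s, 0 ≤ w y) (v : ι → ℝ) :
    |∑ y ∈ s, w y * v y| ≤ (∑ y ∈ s, w y) * ‖v‖ :=
  calc |∑ y ∈ s, w y * v y| ≤ ∑ y ∈ s, |w y * v y| := abs_sum_le_sum_abs _ _
    _ ≤ ∑ y ∈ s, w y * ‖v‖ := sum_le_sum fun y hy => by
        rw [abs_mul, abs_of_nonneg (hw y hy)]
        exact mul_le_mul_of_nonneg_left (norm_le_pi_norm v y) (hw y hy)
    _ = (∑ y ∈ s, w y) * ‖v‖ := (sum_mul _ _ _).symm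

section Rates

variable {d : ℕ} {al au : ℝ}

theorem admissibleRates_nonempty (hau : al ≤ au) (x : Fin d) :
    (admissibleRates d al au x).Nonempty := by
  refine ⟨Function.update (fun _ => al) x (-∑ y ∈ univ \ {x}, al), fun y hy => ?_, ?_⟩
  · simp [Function.update_of_ne hy, hau]
  · rw [Function.update_self]
    refine congrArg Neg.neg (sum_congr rfl fun y hy => ?_)
    rw [Function.update_of_ne (by simpa using hy)]

theorem sum_offDiag_mem_Icc {x : Fin d} {a : Fin d → ℝ} (ha : a ∈ admissibleRates d al au x) :
    ∑ y ∈ univ \ {x}, a y ∈ Set.Icc (((d : ℝ) - 1) * al) (((d : ℝ) - 1) * au) := by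
  have hcard : ((#(univ \ {x}) : ℕ) : ℝ) = (d : ℝ) - 1 := by
    rw [card_sdiff_of_subset (subset_univ _), card_univ, Fintype.card_fin, card_singleton,
      Nat.cast_sub x.pos, Nat.cast_one]
  have hmem : ∀ y ∈ univ \ {x}, a y ∈ Set.Icc al au := fun y hy => ha.1 y (by simpa using hy)
  constructor
  · simpa [hcard] using card_nsmul_le_sum _ a al fun y hy => (hmem y hy).1
  · simpa [hcard] using sum_le_card_nsmul _ a au fun y hy => (hmem y hy).2

end Rates

/-- The paper's `S^μ` is `discountedBellman d al au r f (fun x => F x μ)`: the measure enters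
only through the additive cost `c`. -/
noncomputable def discountedBellman (d : ℕ) (al au r : ℝ) (f : Fin d → (Fin d → ℝ) → ℝ)
    (c u : Fin d → ℝ) (x : Fin d) : ℝ :=
  sInf ((fun a => (∑ y ∈ univ \ {x}, a y + r)⁻¹ *
      (∑ y ∈ univ \ {x}, a y * u y + f x a + c x)) '' admissibleRates d al au x)

noncomputable def bellmanContractionFactor (d : ℕ) (au r : ℝ) : ℝ :=
  ((d : ℝ) - 1) * au / (((d : ℝ) - 1) * au + r)

section Bellman

variable {d : ℕ} {al au r : ℝ}

theorem sub_one_mul_add_pos (hd : 0 < d) {b : ℝ} (hb : 0 ≤ b) (hr : 0 < r) :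
    0 < ((d : ℝ) - 1) * b + r := by
  have : (1 : ℝ) ≤ d := by exact_mod_cast hd
  nlinarith

theorem bellmanContractionFactor_nonneg [NeZero d] (hau : 0 ≤ au) (hr : 0 < r) :
    0 ≤ bellmanContractionFactor d au r := by
  have : (1 : ℝ) ≤ d := by exact_mod_cast NeZero.one_le
  have : 0 ≤ ((d : ℝ) - 1) * au := mul_nonneg (by linarith) hau
  unfold bellmanContractionFactor
  positivity

theorem one_sub_bellmanContractionFactor [NeZero d] (hau : 0 ≤ au) (hr : 0 < r) :
    1 - bellmanContractionFactor d au r = r / (((d : ℝ) - 1) * au + r) := by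
  have := sub_one_mul_add_pos (Nat.pos_of_neZero d) hau hr
  unfold bellmanContractionFactor
  field_simp
  ring

theorem bellmanContractionFactor_lt_one [NeZero d] (hau : 0 ≤ au) (hr : 0 < r) :
    bellmanContractionFactor d au r < 1 := by
  rw [← sub_pos, one_sub_bellmanContractionFactor hau hr]
  exact div_pos hr (sub_one_mul_add_pos (Nat.pos_of_neZero d) hau hr)

theorem abs_discountedBellman_sub_le_of_cost (hal : 0 < al) (hau : al ≤ au) (hr : 0 < r)
    (f : Fin d → (Fin d → ℝ) → ℝ) (c c' u : Fin d → ℝ) (x : Fin d) :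
    |discountedBellman d al au r f c u x - discountedBellman d al au r f c' u x| ≤
      |c x - c' x| / (((d : ℝ) - 1) * al + r) := by
  have hA := sub_one_mul_add_pos x.pos hal.le hr
  refine abs_sInf_image_sub_sInf_image_le (admissibleRates_nonempty hau x) fun a ha => ?_
  have hs := (sum_offDiag_mem_Icc ha).1
  rw [← mul_sub, add_sub_add_left_eq_sub, abs_mul, abs_inv, abs_of_pos (by linarith),
    inv_mul_eq_div]
  exact div_le_div_of_nonneg_left (abs_nonneg _) hA (by linarith)

theorem abs_discountedBellman_sub_le_of_value (hal : 0 < al) (hau : al ≤ au) (hr : 0 < r)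
    (f : Fin d → (Fin d → ℝ) → ℝ) (c u u' : Fin d → ℝ) (x : Fin d) :
    |discountedBellman d al au r f c u x - discountedBellman d al au r f c u' x| ≤
      bellmanContractionFactor d au r * ‖u - u'‖ := by
  refine abs_sInf_image_sub_sInf_image_le (admissibleRates_nonempty hau x) fun a ha => ?_
  have hw : ∀ y ∈ univ \ {x}, 0 ≤ a y := fun y hy => hal.le.trans (ha.1 y (by simpa using hy)).1
  have hweighted := abs_sum_mul_le_sum_mul_norm (univ \ {x}) hw (u - u')
  have hs := sum_offDiag_mem_Icc ha
  have hs0 : 0 ≤ ∑ y ∈ univ \ {x}, a y := sum_nonneg hw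
  set s := ∑ y ∈ univ \ {x}, a y
  have hdiff : ∑ y ∈ univ \ {x}, a y * u y - ∑ y ∈ univ \ {x}, a y * u' y =
      ∑ y ∈ univ \ {x}, a y * (u - u') y := by
    simp only [Pi.sub_apply, mul_sub, sum_sub_distrib]
  calc |(s + r)⁻¹ * (∑ y ∈ univ \ {x}, a y * u y + f x a + c x) -
        (s + r)⁻¹ * (∑ y ∈ univ \ {x}, a y * u' y + f x a + c x)|
      = |∑ y ∈ univ \ {x}, a y * (u - u') y| / (s + r) := by
        rw [← mul_sub, add_sub_add_right_eq_sub, add_sub_add_right_eq_sub, hdiff, abs_mul,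
          abs_inv, abs_of_pos (by linarith : 0 < s + r), inv_mul_eq_div]
    _ ≤ s * ‖u - u'‖ / (s + r) := by gcongr
    _ ≤ bellmanContractionFactor d au r * ‖u - u'‖ := by
        rw [mul_div_right_comm]
        gcongr
        unfold bellmanContractionFactor
        rw [div_le_div_iff₀ (by linarith) (by nlinarith [hs.2])]
        nlinarith [hs.2]

theorem dist_discountedBellman_le_of_cost [NeZero d] (hal : 0 < al) (hau : al ≤ au)
    (hr : 0 < r) (f : Fin d → (Fin d → ℝ) → ℝ) (c c' u : Fin d → ℝ) :
    dist (discountedBellman d al au r f c u) (discountedBellman d al au r f c' u) ≤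
      dist c c' / (((d : ℝ) - 1) * al + r) := by
  refine dist_pi_le_iff'.2 fun x => ?_
  rw [Real.dist_eq]
  refine (abs_discountedBellman_sub_le_of_cost hal hau hr f c c' u x).trans ?_
  rw [← Real.dist_eq]
  exact div_le_div_of_nonneg_right (dist_le_pi_dist c c' x)
    (sub_one_mul_add_pos x.pos hal.le hr).le

theorem discountedBellman_contractingWith [NeZero d] (hal : 0 < al) (hau : al ≤ au)
    (hr : 0 < r) (f : Fin d → (Fin d → ℝ) → ℝ) (c : Fin d → ℝ) :
    ContractingWith (bellmanContractionFactor d au r).toNNReal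
      (discountedBellman d al au r f c) := by
  have hau₀ : 0 ≤ au := hal.le.trans hau
  refine ⟨Real.toNNReal_lt_one.2 (bellmanContractionFactor_lt_one hau₀ hr),
    LipschitzWith.of_dist_le_mul fun u u' => ?_⟩
  rw [Real.coe_toNNReal _ (bellmanContractionFactor_nonneg hau₀ hr), dist_eq_norm u u']
  exact dist_pi_le_iff'.2 fun x =>
    (Real.dist_eq _ _).trans_le (abs_discountedBellman_sub_le_of_value hal hau hr f c u u' x)

end Bellman

theorem stationary_value_map_lipschitz_in_measure_general
    (d : ℕ) (al au r CLF : ℝ)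
    (hal : 0 < al) (hau : al ≤ au) (hr : 0 < r)
    (f F : Fin d → (Fin d → ℝ) → ℝ)
    (hF : ∀ (x : Fin d) (η η' : Fin d → ℝ), |F x η - F x η'| ≤ CLF * ‖η - η'‖)
    (S : (Fin d → ℝ) → (Fin d → ℝ) → Fin d → ℝ)
    (hS : ∀ (ν u : Fin d → ℝ) (x : Fin d), S ν u x =
      sInf ((fun a => (∑ y ∈ Finset.univ \ {x}, a y + r)⁻¹ *
          (∑ y ∈ Finset.univ \ {x}, a y * u y + f x a + F x ν)) ''
        admissibleRates d al au x))
    (μ μ' : Fin d → ℝ)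
    (u u' : Fin d → ℝ)
    (hu : S μ u = u) (hu' : S μ' u' = u') :
    ‖u - u'‖ ≤ ((((d : ℝ) - 1) * au + r) / r) *
        (CLF / (((d : ℝ) - 1) * al + r)) * ‖μ - μ'‖ := by
  obtain rfl : S = fun ν => discountedBellman d al au r f fun x => F x ν := by
    funext ν u x
    exact hS ν u x
  rcases Nat.eq_zero_or_pos d with rfl | hd
  · rw [Subsingleton.elim u u', Subsingleton.elim μ μ', sub_self, sub_self, norm_zero, mul_zero]
  have : NeZero d := ⟨hd.ne'⟩
  have hcost : dist (fun x => F x μ) (fun x => F x μ') ≤ CLF * ‖μ - μ'‖ :=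
    dist_pi_le_iff'.2 fun x => (Real.dist_eq _ _).trans_le (hF x μ μ')
  have hfix :=
    (discountedBellman_contractingWith hal hau hr f _).dist_fixedPoint_fixedPoint_of_dist_le' _
      hu hu' fun v => (dist_discountedBellman_le_of_cost hal hau hr f _ _ v).trans
        (div_le_div_of_nonneg_right hcost (sub_one_mul_add_pos hd hal.le hr).le)
  rw [← dist_eq_norm]
  refine hfix.trans_eq ?_
  rw [Real.coe_toNNReal _ (bellmanContractionFactor_nonneg (hal.le.trans hau) hr),
    one_sub_bellmanContractionFactor (hal.le.trans hau) hr]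
  field_simp

/-- Lipschitz dependence of the stationary value map on the measure: if
`u = S^μ u` and `u' = S^{μ'} u'` are the fixed points of the stationary
discounted value contractions, then
`‖u − u'‖_∞ ≤ (((d−1)𝔞_u + r)/r)·(C_{L,F}/((d−1)𝔞_l + r))·‖μ − μ'‖_∞`. -/
theorem stationary_value_map_lipschitz_in_measure
    (d : ℕ) (hd : 2 ≤ d) (al au r CLF : ℝ)
    (hal : 0 < al) (hau : al ≤ au) (hr : 0 < r)
    (f F : Fin d → (Fin d → ℝ) → ℝ)
    (hf : ∀ x, Continuous (f x))
    (hF : ∀ (x : Fin d) (η η' : Fin d → ℝ), |F x η - F x η'| ≤ CLF * ‖η - η'‖)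
    (S : (Fin d → ℝ) → (Fin d → ℝ) → Fin d → ℝ)
    (hS : ∀ (ν u : Fin d → ℝ) (x : Fin d), S ν u x =
      sInf ((fun a => (∑ y ∈ Finset.univ \ {x}, a y + r)⁻¹ *
          (∑ y ∈ Finset.univ \ {x}, a y * u y + f x a + F x ν)) ''
        admissibleRates d al au x))
    (μ μ' : Fin d → ℝ)
    (hμ : (∀ x, 0 ≤ μ x) ∧ ∑ x : Fin d, μ x = 1)
    (hμ' : (∀ x, 0 ≤ μ' x) ∧ ∑ x : Fin d, μ' x = 1)
    (u u' : Fin d → ℝ)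
    (hu : S μ u = u) (hu' : S μ' u' = u') :
    ‖u - u'‖ ≤ ((((d : ℝ) - 1) * au + r) / r) *
        (CLF / (((d : ℝ) - 1) * al + r)) * ‖μ - μ'‖ :=
  stationary_value_map_lipschitz_in_measure_general d al au r CLF hal hau hr f F hF S hS μ μ' u u'
    hu hu'
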